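/- arXiv:2001.10578 — 5 statements merged into one kernel-verified Lean document; each statement's English description precedes it below -/
import Mathlib

section
/- Let k be a field and A a k-algebra. Any two symmetric separability idempotents for A are equal; that is, if p = Σ p¹ ⊗ p² and q = Σ q¹ ⊗ q² are elements of A ⊗ A each satisfying (i) (x·p¹) ⊗ p² = p¹ ⊗ (p²·x) for all x ∈ A, (ii) Σ p¹·p² = 1, and (iii) invariance under the flip of tensor factors, then p = q. -/
/-!
Identify `A ⊗ A` with the enveloping algebra `A ⊗ Aᵐᵒᵖ` via `x ⊗ y ↦ x ⊗ y°`. Condition (i)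
says that `q` is left-balanced: `(a ⊗ 1) q = (1 ⊗ a°) q`; combined with the flip symmetry it
also says that `p` is right-balanced: `p (a ⊗ 1) = p (1 ⊗ a°)`. Hence in the product `p q` the
factor `p` may be collapsed to `μ(p) ⊗ 1 = 1`, giving `p q = q`, and likewise the factor `q` may
be collapsed to `1 ⊗ μ(flip q)° = 1`, giving `p q = p`.
-/

open scoped TensorProduct

/-- `p ∈ A ⊗[k] A` is a symmetric separability idempotent for the `k`-algebra `A`:
(i) `(x·p¹) ⊗ p² = p¹ ⊗ (p²·x)` for all `x ∈ A`, (ii) `Σ p¹·p² = 1`, and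
(iii) `p` is invariant under the flip of the tensor factors. -/
def IsSymmSepIdem (k : Type*) {A : Type*} [CommSemiring k] [Ring A] [Algebra k A]
    (p : A ⊗[k] A) : Prop :=
  (∀ x : A, LinearMap.rTensor A (LinearMap.mulLeft k x) p
      = LinearMap.lTensor A (LinearMap.mulRight k x) p) ∧
  LinearMap.mul' k A p = 1 ∧
  TensorProduct.comm k A A p = p

open MulOpposite LinearMap TensorProduct

section Enveloping

variable {R A : Type*} [CommSemiring R] [Semiring A] [Algebra R A]

variable (R A) in
noncomputable def toEnveloping : A ⊗[R] A ≃ₗ[R] A ⊗[R] Aᵐᵒᵖ :=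
  TensorProduct.congr (LinearEquiv.refl R A) (opLinearEquiv R)

@[simp]
theorem toEnveloping_tmul (x y : A) : toEnveloping R A (x ⊗ₜ y) = x ⊗ₜ op y := rfl

theorem toEnveloping_tmul_eq_mul (x y : A) :
    toEnveloping R A (x ⊗ₜ y) = (x ⊗ₜ[R] (1 : Aᵐᵒᵖ)) * ((1 : A) ⊗ₜ op y) := by
  simp [Algebra.TensorProduct.tmul_mul_tmul]

theorem tmul_one_mul_toEnveloping (a : A) (r : A ⊗[R] A) :
    (a ⊗ₜ[R] (1 : Aᵐᵒᵖ)) * toEnveloping R A r = toEnveloping R A (rTensor A (mulLeft R a) r) := by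
  induction r using TensorProduct.induction_on with
  | zero => simp
  | tmul x y => simp [Algebra.TensorProduct.tmul_mul_tmul]
  | add x y hx hy => simp only [map_add, mul_add, hx, hy]

theorem one_tmul_op_mul_toEnveloping (a : A) (r : A ⊗[R] A) :
    ((1 : A) ⊗ₜ[R] op a) * toEnveloping R A r = toEnveloping R A (lTensor A (mulRight R a) r) := by
  induction r using TensorProduct.induction_on with
  | zero => simp
  | tmul x y => simp [Algebra.TensorProduct.tmul_mul_tmul, ← op_mul]
  | add x y hx hy => simp only [map_add, mul_add, hx, hy]

theorem toEnveloping_mul_tmul_one (a : A) (r : A ⊗[R] A) :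
    toEnveloping R A r * (a ⊗ₜ[R] (1 : Aᵐᵒᵖ)) = toEnveloping R A (rTensor A (mulRight R a) r) := by
  induction r using TensorProduct.induction_on with
  | zero => simp
  | tmul x y => simp [Algebra.TensorProduct.tmul_mul_tmul]
  | add x y hx hy => simp only [map_add, add_mul, hx, hy]

theorem toEnveloping_mul_one_tmul_op (a : A) (r : A ⊗[R] A) :
    toEnveloping R A r * ((1 : A) ⊗ₜ[R] op a) = toEnveloping R A (lTensor A (mulLeft R a) r) := by
  induction r using TensorProduct.induction_on with
  | zero => simp
  | tmul x y => simp [Algebra.TensorProduct.tmul_mul_tmul, ← op_mul]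
  | add x y hx hy => simp only [map_add, add_mul, hx, hy]

theorem toEnveloping_mul_of_left_balanced {f : A ⊗[R] Aᵐᵒᵖ}
    (hf : ∀ a : A, (a ⊗ₜ[R] (1 : Aᵐᵒᵖ)) * f = ((1 : A) ⊗ₜ op a) * f) (r : A ⊗[R] A) :
    toEnveloping R A r * f = (mul' R A r ⊗ₜ[R] (1 : Aᵐᵒᵖ)) * f := by
  induction r using TensorProduct.induction_on with
  | zero => simp
  | tmul x y =>
    rw [toEnveloping_tmul_eq_mul, mul_assoc, ← hf, ← mul_assoc,
      Algebra.TensorProduct.tmul_mul_tmul, mul_one, mul'_apply]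
  | add x y hx hy => simp only [map_add, add_mul, hx, hy, add_tmul]

theorem mul_toEnveloping_of_right_balanced {e : A ⊗[R] Aᵐᵒᵖ}
    (he : ∀ a : A, e * (a ⊗ₜ[R] (1 : Aᵐᵒᵖ)) = e * ((1 : A) ⊗ₜ op a)) (r : A ⊗[R] A) :
    e * toEnveloping R A r = e * ((1 : A) ⊗ₜ[R] op (mul' R A (TensorProduct.comm R A A r))) := by
  induction r using TensorProduct.induction_on with
  | zero => simp
  | tmul x y =>
    rw [toEnveloping_tmul_eq_mul, ← mul_assoc, he, mul_assoc,
      Algebra.TensorProduct.tmul_mul_tmul, one_mul, ← op_mul, comm_tmul, mul'_apply]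
  | add x y hx hy => simp only [map_add, mul_add, hx, hy, op_add, tmul_add]

end Enveloping

theorem comm_rTensor_apply {R M N P : Type*} [CommSemiring R] [AddCommMonoid M]
    [AddCommMonoid N] [AddCommMonoid P] [Module R M] [Module R N] [Module R P]
    (g : N →ₗ[R] P) (x : N ⊗[R] M) :
    TensorProduct.comm R P M (rTensor M g x) = lTensor M g (TensorProduct.comm R N M x) := by
  simpa using LinearMap.congr_fun (comm_comp_rTensor_comp_comm_eq (Q := M) g)
    (TensorProduct.comm R N M x)

theorem comm_lTensor_apply {R M N P : Type*} [CommSemiring R] [AddCommMonoid M]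
    [AddCommMonoid N] [AddCommMonoid P] [Module R M] [Module R N] [Module R P]
    (g : N →ₗ[R] P) (x : M ⊗[R] N) :
    TensorProduct.comm R M P (lTensor M g x) = rTensor M g (TensorProduct.comm R M N x) := by
  simpa using LinearMap.congr_fun (comm_comp_lTensor_comp_comm_eq (Q := M) g)
    (TensorProduct.comm R M N x)

namespace IsSymmSepIdem

variable {k A : Type*} [CommSemiring k] [Ring A] [Algebra k A] {p : A ⊗[k] A}

theorem rTensor_mulRight_eq_lTensor_mulLeft (hp : IsSymmSepIdem k p) (x : A) :
    rTensor A (mulRight k x) p = lTensor A (mulLeft k x) p := by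
  have h := congrArg (TensorProduct.comm k A A) (hp.1 x)
  rw [comm_rTensor_apply, comm_lTensor_apply, hp.2.2] at h
  exact h.symm

theorem tmul_one_mul_toEnveloping_eq (hp : IsSymmSepIdem k p) (a : A) :
    (a ⊗ₜ[k] (1 : Aᵐᵒᵖ)) * toEnveloping k A p = ((1 : A) ⊗ₜ op a) * toEnveloping k A p := by
  rw [tmul_one_mul_toEnveloping, one_tmul_op_mul_toEnveloping, hp.1 a]

theorem toEnveloping_mul_tmul_one_eq (hp : IsSymmSepIdem k p) (a : A) :
    toEnveloping k A p * (a ⊗ₜ[k] (1 : Aᵐᵒᵖ)) = toEnveloping k A p * ((1 : A) ⊗ₜ op a) := by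
  rw [toEnveloping_mul_tmul_one, toEnveloping_mul_one_tmul_op,
    hp.rTensor_mulRight_eq_lTensor_mulLeft a]

end IsSymmSepIdem

/-- Any two symmetric separability idempotents for a `k`-algebra `A` are equal. -/
theorem symmSepIdem_unique (k A : Type*) [Field k] [Ring A] [Algebra k A]
    (p q : A ⊗[k] A) (hp : IsSymmSepIdem k p) (hq : IsSymmSepIdem k q) :
    p = q := by
  have hpq_eq_q : toEnveloping k A p * toEnveloping k A q = toEnveloping k A q := by
    rw [toEnveloping_mul_of_left_balanced hq.tmul_one_mul_toEnveloping_eq, hp.2.1,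
      ← Algebra.TensorProduct.one_def, one_mul]
  have hpq_eq_p : toEnveloping k A p * toEnveloping k A q = toEnveloping k A p := by
    rw [mul_toEnveloping_of_right_balanced hp.toEnveloping_mul_tmul_one_eq, hq.2.2, hq.2.1, op_one,
      ← Algebra.TensorProduct.one_def, mul_one]
  exact (toEnveloping k A).injective (hpq_eq_p.symm.trans hpq_eq_q)
end

section
/- Let k be an algebraically closed field of characteristic zero and A a finite-dimensional semisimple k-algebra. Then there exists a unique symmetric separability idempotent for A, i.e. a unique element p = Σ p¹ ⊗ p² ∈ A ⊗ A satisfying (i) (x·p¹) ⊗ p² = p¹ ⊗ (p²·x) for all x ∈ A, (ii) Σ p¹·p² = 1, and (iii) invariance under the flip of tensor factors. -/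
open scoped TensorProduct

/-!
Existence: for the trace form `B a b = tr (x ↦ a * b * x)` and a basis `b` with
`B`-dual basis `d`, the Casimir element `∑ bᵢ ⊗ dᵢ` works. In characteristic zero `B` is
nondegenerate on a semisimple algebra: if `a` is in its radical, the left ideal `A a` is
generated by an idempotent `e = c a`, and `tr (e ·) = B a c = 0`; an idempotent endomorphism
with zero trace vanishes, so `a = 0`.
Since `B` is symmetric and associative, left multiplication by `x` is adjoint to right
multiplication by `x`, which gives (i), and symmetry gives (iii). Finally
`B z (∑ bᵢ dᵢ) = ∑ B (z bᵢ) dᵢ = tr (z ·) = B z 1`, which gives (ii).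

Uniqueness: in the enveloping algebra `Aᵐᵒᵖ ⊗ A`, (i) and (ii) give `e f = e` for any
two such idempotents, and the flip reverses products, so `e = flip (e f) = f e = f`.
-/

open LinearMap TensorProduct

section Casimir

variable {k A ι : Type*} [Field k] [Ring A] [Algebra k A] [Fintype ι] [DecidableEq ι]
  {B : LinearMap.BilinForm k A} (hB : B.Nondegenerate) (b : Module.Basis ι k A)

noncomputable def casimir : A ⊗[k] A := ∑ i, b i ⊗ₜ B.dualBasis hB b i

lemma sum_apply_smul_dualBasis (z : A) : ∑ i, B z (b i) • B.dualBasis hB b i = z := by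
  simpa using (B.dualBasis hB b).sum_repr z

lemma repr_apply_eq_apply_dualBasis (hBs : B.IsSymm) (z : A) (i : ι) :
    b.repr z i = B z (B.dualBasis hB b i) := by
  conv_lhs => rw [← B.dualBasis_dualBasis hB hBs b]
  exact LinearMap.BilinForm.dualBasis_repr_apply hB _ z i

lemma tmul_eq_sum_dualBasis_tmul (z w : A) :
    z ⊗ₜ w = ∑ j, B z (b j) • (B.dualBasis hB b j ⊗ₜ[k] w) := by
  simp_rw [smul_tmul', ← sum_tmul, sum_apply_smul_dualBasis]

lemma tmul_eq_sum_tmul_dualBasis (z w : A) :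
    z ⊗ₜ w = ∑ j, B w (b j) • (z ⊗ₜ[k] B.dualBasis hB b j) := by
  simp_rw [← tmul_smul, ← tmul_sum, sum_apply_smul_dualBasis]

lemma rTensor_casimir_eq_lTensor (hBs : B.IsSymm) {f g : A →ₗ[k] A}
    (hfg : B.IsAdjointPair B f g) :
    f.rTensor A (casimir hB b) = g.lTensor A (casimir hB b) := by
  set d := B.dualBasis hB b
  have hd : B.dualBasis hB d = b := B.dualBasis_dualBasis hB hBs b
  calc f.rTensor A (casimir hB b) = ∑ i, f (b i) ⊗ₜ d i := by simp [casimir, d]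
    _ = ∑ i, ∑ j, B (f (b i)) (d j) • (b j ⊗ₜ d i) :=
      Finset.sum_congr rfl fun i _ => by rw [tmul_eq_sum_dualBasis_tmul hB d, hd]
    _ = ∑ i, ∑ j, B (g (d i)) (b j) • (b i ⊗ₜ d j) := by
      rw [Finset.sum_comm]
      exact Finset.sum_congr rfl fun i _ => Finset.sum_congr rfl fun j _ => by rw [hfg, hBs.eq]
    _ = ∑ i, b i ⊗ₜ g (d i) :=
      Finset.sum_congr rfl fun i _ => by rw [tmul_eq_sum_tmul_dualBasis hB b]
    _ = g.lTensor A (casimir hB b) := by simp [casimir, d]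

lemma comm_casimir (hBs : B.IsSymm) :
    TensorProduct.comm k A A (casimir hB b) = casimir hB b := by
  set d := B.dualBasis hB b
  calc TensorProduct.comm k A A (casimir hB b) = ∑ i, d i ⊗ₜ b i := by simp [casimir, d]
    _ = ∑ i, ∑ j, B (b i) (b j) • (d i ⊗ₜ d j) :=
      Finset.sum_congr rfl fun i _ => by rw [tmul_eq_sum_tmul_dualBasis hB b]
    _ = ∑ i, ∑ j, B (b i) (b j) • (d j ⊗ₜ d i) := by
      rw [Finset.sum_comm]
      exact Finset.sum_congr rfl fun i _ => Finset.sum_congr rfl fun j _ => by rw [hBs.eq]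
    _ = casimir hB b :=
      Finset.sum_congr rfl fun i _ => by rw [← tmul_eq_sum_dualBasis_tmul hB b]

lemma apply_mul'_casimir (hBs : B.IsSymm) (hBa : ∀ x y z : A, B (x * y) z = B x (y * z))
    (z : A) : B z (mul' k A (casimir hB b)) = trace k A (mulLeft k z) := by
  rw [trace_eq_matrix_trace k b, Matrix.trace]
  simp only [casimir, map_sum, mul'_apply, ← hBa, Matrix.diag, toMatrix_apply, mulLeft_apply,
    repr_apply_eq_apply_dualBasis hB b hBs]

end Casimir

section TraceForm

variable (k A : Type*) [Field k] [Ring A] [Algebra k A]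

noncomputable def mulLeftTraceForm : LinearMap.BilinForm k A :=
  (mul k A).compr₂ (trace k A ∘ₗ mul k A)

variable {k A}

lemma mulLeftTraceForm_apply (a b : A) :
    mulLeftTraceForm k A a b = trace k A (mulLeft k (a * b)) := rfl

lemma mulLeftTraceForm_mul_left (a b c : A) :
    mulLeftTraceForm k A (a * b) c = mulLeftTraceForm k A a (b * c) := by
  rw [mulLeftTraceForm_apply, mulLeftTraceForm_apply, mul_assoc]

variable (k A) in
lemma mulLeftTraceForm_isSymm : (mulLeftTraceForm k A).IsSymm := ⟨fun a b => by
  simp only [mulLeftTraceForm_apply, mulLeft_mul, ← Module.End.mul_eq_comp]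
  exact trace_mul_comm k _ _⟩

lemma mulLeftTraceForm_isAdjointPair (x : A) :
    (mulLeftTraceForm k A).IsAdjointPair (mulLeftTraceForm k A) (mulLeft k x) (mulRight k x) :=
  fun a c => by
    rw [mulLeft_apply, mulRight_apply, (mulLeftTraceForm_isSymm k A).eq,
      ← mulLeftTraceForm_mul_left, (mulLeftTraceForm_isSymm k A).eq]

variable [FiniteDimensional k A]

variable (k A) in
theorem mulLeftTraceForm_nondegenerate [CharZero k] [IsSemisimpleRing A] :
    (mulLeftTraceForm k A).Nondegenerate := by
  refine .ofSeparatingLeft fun a ha => ?_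
  obtain ⟨e, he, hspan⟩ := IsSemisimpleRing.ideal_eq_span_idempotent (Ideal.span {a})
  obtain ⟨c, rfl⟩ : ∃ c, c * a = e :=
    Ideal.mem_span_singleton'.mp (hspan ▸ Ideal.mem_span_singleton_self e)
  have htrace : trace k A (mulLeft k (c * a)) = 0 := by
    rw [← mul_one (c * a), ← mulLeftTraceForm_apply, (mulLeftTraceForm_isSymm k A).eq,
      ← mulLeftTraceForm_mul_left, (mulLeftTraceForm_isSymm k A).eq]
    exact ha _
  have hmulLeft : mulLeft k (c * a) = 0 := by
    refine IsIdempotentElem.eq_zero_of_trace_eq_zero ?_ htrace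
    rw [IsIdempotentElem, Module.End.mul_eq_comp, ← mulLeft_mul, he]
  have hca : c * a = 0 := by simpa using congr($hmulLeft 1)
  rw [hca, Ideal.span_singleton_eq_bot.mpr rfl] at hspan
  exact Ideal.span_singleton_eq_bot.mp hspan

theorem isSymmSepIdem_casimir_mulLeftTraceForm [CharZero k]
    [IsSemisimpleRing A] {ι : Type*} [Fintype ι] [DecidableEq ι] (b : Module.Basis ι k A) :
    IsSymmSepIdem k (casimir (mulLeftTraceForm_nondegenerate k A) b) := by
  have hB := mulLeftTraceForm_nondegenerate k A
  have hBs := mulLeftTraceForm_isSymm k A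
  refine ⟨fun x => rTensor_casimir_eq_lTensor hB b hBs (mulLeftTraceForm_isAdjointPair x), ?_,
    comm_casimir hB b hBs⟩
  refine LinearMap.ker_eq_bot.mp hB.flip.ker_eq_bot (LinearMap.ext fun z => ?_)
  rw [BilinForm.flip_apply, BilinForm.flip_apply,
    apply_mul'_casimir hB b hBs mulLeftTraceForm_mul_left, mulLeftTraceForm_apply, mul_one]

end TraceForm

section EnvelopingMul

variable {k A : Type*} [CommSemiring k] [Ring A] [Algebra k A]

variable (k A) in
noncomputable def envMul : A ⊗[k] A →ₗ[k] A ⊗[k] A →ₗ[k] A ⊗[k] A :=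
  let φ : A ⊗[k] A ≃ₗ[k] Aᵐᵒᵖ ⊗[k] A := (MulOpposite.opLinearEquiv k).rTensor A
  ((mul k (Aᵐᵒᵖ ⊗[k] A)).compl₁₂ φ.toLinearMap φ.toLinearMap).compr₂
    φ.symm.toLinearMap

@[simp]
lemma envMul_tmul (a b c d : A) :
    envMul k A (a ⊗ₜ b) (c ⊗ₜ d) = (c * a) ⊗ₜ (b * d) := by
  simp [envMul]

lemma envMul_tmul_right (e : A ⊗[k] A) (c d : A) :
    envMul k A e (c ⊗ₜ d) = (mulRight k d).lTensor A ((mulLeft k c).rTensor A e) := by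
  induction e using TensorProduct.induction_on with
  | zero => simp
  | tmul a b => simp
  | add x y hx hy => simp only [map_add, LinearMap.add_apply, hx, hy]

lemma envMul_eq_lTensor_mulRight {e : A ⊗[k] A}
    (he : ∀ x : A, (mulLeft k x).rTensor A e = (mulRight k x).lTensor A e) (f : A ⊗[k] A) :
    envMul k A e f = (mulRight k (mul' k A f)).lTensor A e := by
  induction f using TensorProduct.induction_on with
  | zero => simp
  | tmul c d =>
    rw [envMul_tmul_right, he, ← lTensor_comp_apply, mul'_apply, mulRight_mul]
  | add x y hx hy =>
    rw [map_add, hx, hy, map_add, ← LinearMap.add_apply, ← lTensor_add]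
    congr 2
    ext z
    simp [mul_add]

lemma comm_envMul (u v : A ⊗[k] A) :
    TensorProduct.comm k A A (envMul k A u v)
      = envMul k A (TensorProduct.comm k A A v) (TensorProduct.comm k A A u) := by
  induction u using TensorProduct.induction_on with
  | zero => simp
  | add x y hx hy => simp only [map_add, LinearMap.add_apply, hx, hy]
  | tmul a b =>
    induction v using TensorProduct.induction_on with
    | zero => simp
    | add x y hx hy => simp only [map_add, LinearMap.add_apply, hx, hy]
    | tmul c d => simp

theorem IsSymmSepIdem.eq {e f : A ⊗[k] A} (he : IsSymmSepIdem k e) (hf : IsSymmSepIdem k f) :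
    e = f := by
  have envMul_eq_left {p q : A ⊗[k] A} (hp : IsSymmSepIdem k p) (hq : IsSymmSepIdem k q) :
      envMul k A p q = p := by
    rw [envMul_eq_lTensor_mulRight hp.1, hq.2.1, mulRight_one, lTensor_id, LinearMap.id_apply]
  calc e = TensorProduct.comm k A A (envMul k A e f) := by rw [envMul_eq_left he hf, he.2.2]
    _ = envMul k A f e := by rw [comm_envMul, he.2.2, hf.2.2]
    _ = f := envMul_eq_left hf he

end EnvelopingMul

theorem existsUnique_symmSepIdem_general (k A : Type*) [Field k] [CharZero k]
    [Ring A] [Algebra k A] [FiniteDimensional k A] [IsSemisimpleRing A] :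
    ∃! p : A ⊗[k] A, IsSymmSepIdem k p :=
  have hp := isSymmSepIdem_casimir_mulLeftTraceForm (Module.finBasis k A)
  ⟨_, hp, fun _ hq => hq.eq hp⟩

/-- For a finite-dimensional semisimple algebra `A` over an algebraically closed field `k`
of characteristic zero there exists a unique symmetric separability idempotent. -/
theorem existsUnique_symmSepIdem (k A : Type*) [Field k] [IsAlgClosed k] [CharZero k]
    [Ring A] [Algebra k A] [FiniteDimensional k A] [IsSemisimpleRing A] :
    ∃! p : A ⊗[k] A, IsSymmSepIdem k p :=
  existsUnique_symmSepIdem_general k A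
end

section
/- Let k be an algebraically closed field of characteristic zero and A a finite-dimensional semisimple k-algebra. Let (p¹_i)_i be a k-basis of A and let (p²_i)_i be the dual basis of A with respect to the nondegenerate trace pairing T(a,b) = tr(L_{ab}), i.e. T(p¹_i, p²_j) = δ_{ij}. Then the element Σ_i p¹_i ⊗ p²_i ∈ A ⊗ A is a symmetric separability idempotent for A: it satisfies (i) (x·p¹) ⊗ p² = p¹ ⊗ (p²·x) for all x ∈ A, (ii) Σ p¹·p² = 1, and (iii) invariance under the flip of tensor factors. -/
open scoped TensorProduct

/-!
Let `τ` be a linear form on `A` with `τ (a * b) = τ (b * a)`, such as the regular trace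
`a ↦ tr(L_a)`, and let `(cᵢ)` be a family dual to a basis `(bᵢ)` for the pairing
`τ (a * b)`. Then the pairing is nondegenerate, and `a ⊗ b ↦ (y ↦ τ (y * b) • a)` is an
isomorphism `A ⊗ A ≃ End A` sending `Σ bᵢ ⊗ cᵢ` to the identity. Under it, `x` acting on the
left factor becomes post-composition with `L_x` and `x` acting on the right factor becomes
pre-composition with `L_x` (by cyclicity of `τ`); as the identity commutes with `L_x`, this
gives (i). The flip sends `Σ bᵢ ⊗ cᵢ` to `Σ cᵢ ⊗ bᵢ`, built from the basis `(cᵢ)` and its dual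
family `(bᵢ)`, so it also maps to the identity: this is (iii). For the regular trace,
computing `tr(L_x)` in the basis `(bᵢ)` gives `τ x = τ (x * Σ bᵢ cᵢ)`, whence (ii) by
nondegeneracy.
-/

open LinearMap (BilinForm)
open Module (Basis)

section MulForm

variable {k A : Type*} [Field k] [Ring A] [Algebra k A] (τ : A →ₗ[k] k)

def mulForm : BilinForm k A := (LinearMap.mul k A).compr₂ τ

@[simp]
lemma mulForm_apply (a b : A) : mulForm τ a b = τ (a * b) := rfl

def tensorToEnd : A ⊗[k] A →ₗ[k] Module.End k A :=
  dualTensorHom k A A ∘ₗ (mulForm τ).flip.rTensor A ∘ₗ (TensorProduct.comm k A A).toLinearMap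

@[simp]
lemma tensorToEnd_tmul (a b y : A) : tensorToEnd τ (a ⊗ₜ b) y = τ (y * b) • a := rfl

lemma tensorToEnd_injective [FiniteDimensional k A] (h : (mulForm τ).Nondegenerate) :
    Function.Injective (tensorToEnd τ) :=
  dualTensorHom_bijective.injective.comp <|
    (Module.Flat.rTensor_preserves_injective_linearMap _ <|
      LinearMap.ker_eq_bot.mp h.flip.ker_eq_bot).comp (TensorProduct.comm k A A).injective

lemma tensorToEnd_rTensor_mulLeft (x : A) (t : A ⊗[k] A) :
    tensorToEnd τ (LinearMap.rTensor A (LinearMap.mulLeft k x) t)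
      = LinearMap.mulLeft k x ∘ₗ tensorToEnd τ t := by
  induction t using TensorProduct.induction_on with
  | zero => simp
  | tmul a b => ext y; simp
  | add s t hs ht => simp [hs, ht, LinearMap.comp_add]

variable {τ}

lemma tensorToEnd_lTensor_mulRight (hτ : ∀ a b, τ (a * b) = τ (b * a)) (x : A)
    (t : A ⊗[k] A) :
    tensorToEnd τ (LinearMap.lTensor A (LinearMap.mulRight k x) t)
      = tensorToEnd τ t ∘ₗ LinearMap.mulLeft k x := by
  induction t using TensorProduct.induction_on with
  | zero => simp
  | tmul a b => ext y; simp [← mul_assoc, hτ _ x]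
  | add s t hs ht => simp [hs, ht, LinearMap.add_comp]

variable {ι : Type*} [Fintype ι] [DecidableEq ι] {b : Basis ι k A} {c : ι → A}

section Dual

variable (hbc : ∀ i j, τ (b i * c j) = if i = j then 1 else 0)
include hbc

lemma repr_eq_apply_mul (a : A) (i : ι) : b.repr a i = τ (a * c i) := by
  calc b.repr a i = τ ((∑ j, b.repr a j • b j) * c i) := by
        simp only [Finset.sum_mul, smul_mul_assoc, map_sum, map_smul, hbc, smul_eq_mul,
          mul_ite, mul_one, mul_zero, Finset.sum_ite_eq', Finset.mem_univ, if_true]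
    _ = τ (a * c i) := by rw [b.sum_repr]

lemma trace_eq_sum_apply_mul (f : Module.End k A) :
    LinearMap.trace k A f = ∑ i, τ (f (b i) * c i) := by
  simp [LinearMap.trace_eq_matrix_trace k b, Matrix.trace, LinearMap.toMatrix_apply,
    repr_eq_apply_mul hbc]

lemma tensorToEnd_sum_tmul : tensorToEnd τ (∑ i, b i ⊗ₜ c i) = LinearMap.id := by
  ext y
  simp [← repr_eq_apply_mul hbc, b.sum_repr]

variable (hτ : ∀ a b, τ (a * b) = τ (b * a))
include hτ

lemma mulForm_nondegenerate : (mulForm τ).Nondegenerate := by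
  refine ((⟨hτ⟩ : (mulForm τ).IsSymm).isRefl.nondegenerate_iff_separatingLeft).mpr fun a ha => ?_
  refine b.ext_elem fun i => ?_
  simpa [repr_eq_apply_mul hbc] using ha (c i)

lemma coe_mulForm_dualBasis : ⇑((mulForm τ).dualBasis (mulForm_nondegenerate hbc hτ) b) = c := by
  rw [BilinForm.dualBasis_eq_iff]
  intro i j
  rw [mulForm_apply, hτ, hbc]

variable [FiniteDimensional k A]

lemma rTensor_mulLeft_sum_tmul_eq_lTensor_mulRight (x : A) :
    LinearMap.rTensor A (LinearMap.mulLeft k x) (∑ i, b i ⊗ₜ c i)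
      = LinearMap.lTensor A (LinearMap.mulRight k x) (∑ i, b i ⊗ₜ c i) := by
  refine tensorToEnd_injective τ (mulForm_nondegenerate hbc hτ) ?_
  rw [tensorToEnd_rTensor_mulLeft, tensorToEnd_lTensor_mulRight hτ, tensorToEnd_sum_tmul hbc,
    LinearMap.comp_id, LinearMap.id_comp]

lemma comm_sum_tmul : TensorProduct.comm k A A (∑ i, b i ⊗ₜ c i) = ∑ i, b i ⊗ₜ c i := by
  refine tensorToEnd_injective τ (mulForm_nondegenerate hbc hτ) ?_
  obtain ⟨d, rfl⟩ : ∃ d : Basis ι k A, ⇑d = c := ⟨_, coe_mulForm_dualBasis hbc hτ⟩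
  have hdb : ∀ i j, τ (d i * b j) = if i = j then 1 else 0 := fun i j => by
    rw [hτ, hbc]
    exact if_congr eq_comm rfl rfl
  rw [map_sum]
  simp only [TensorProduct.comm_tmul]
  rw [tensorToEnd_sum_tmul hdb, tensorToEnd_sum_tmul hbc]

end Dual

end MulForm

section RegularTrace

variable (k A : Type*) [Field k] [Ring A] [Algebra k A]

noncomputable def regularTrace : A →ₗ[k] k := LinearMap.trace k A ∘ₗ LinearMap.mul k A

variable {k A}

lemma regularTrace_apply (a : A) :
    regularTrace k A a = LinearMap.trace k A (LinearMap.mulLeft k a) := rfl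

lemma regularTrace_mul_comm (a a' : A) :
    regularTrace k A (a * a') = regularTrace k A (a' * a) := by
  simp only [regularTrace_apply, LinearMap.mulLeft_mul]
  exact LinearMap.trace_mul_comm k _ _

lemma sum_mul_eq_one_of_regularTrace [FiniteDimensional k A] {ι : Type*} [Fintype ι]
    [DecidableEq ι] {b : Basis ι k A} {c : ι → A}
    (hbc : ∀ i j, regularTrace k A (b i * c j) = if i = j then 1 else 0) :
    ∑ i, b i * c i = 1 := by
  refine sub_eq_zero.mp <| (mulForm_nondegenerate hbc regularTrace_mul_comm).2 _ fun x => ?_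
  have hx : regularTrace k A x = ∑ i, regularTrace k A (x * b i * c i) :=
    trace_eq_sum_apply_mul hbc (LinearMap.mulLeft k x)
  simp [mul_sub, Finset.mul_sum, ← mul_assoc, ← hx]

end RegularTrace

theorem isSymmSepIdem_of_dualBases_general (k A : Type*) [Field k]
    [Ring A] [Algebra k A] [FiniteDimensional k A]
    {ι : Type*} [Fintype ι] [DecidableEq ι] (p₁ : Module.Basis ι k A) (p₂ : ι → A)
    (hdual : ∀ i j : ι,
      LinearMap.trace k A (LinearMap.mulLeft k (p₁ i * p₂ j)) = if i = j then 1 else 0) :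
    IsSymmSepIdem k (∑ i : ι, p₁ i ⊗ₜ[k] p₂ i) := by
  refine ⟨rTensor_mulLeft_sum_tmul_eq_lTensor_mulRight hdual regularTrace_mul_comm, ?_,
    comm_sum_tmul hdual regularTrace_mul_comm⟩
  simpa using sum_mul_eq_one_of_regularTrace hdual

/-- If `(p¹_i)` is a basis of a finite-dimensional semisimple algebra `A` over an algebraically
closed field `k` of characteristic zero and `(p²_i)` is the dual basis with respect to the
trace pairing `T(a,b) = tr(L_{ab})`, then `Σ_i p¹_i ⊗ p²_i` is a symmetric separability
idempotent for `A`. -/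
theorem isSymmSepIdem_of_dualBases (k A : Type*) [Field k] [IsAlgClosed k] [CharZero k]
    [Ring A] [Algebra k A] [FiniteDimensional k A] [IsSemisimpleRing A]
    {ι : Type*} [Fintype ι] [DecidableEq ι] (p₁ : Module.Basis ι k A) (p₂ : ι → A)
    (hdual : ∀ i j : ι,
      LinearMap.trace k A (LinearMap.mulLeft k (p₁ i * p₂ j)) = if i = j then 1 else 0) :
    IsSymmSepIdem k (∑ i : ι, p₁ i ⊗ₜ[k] p₂ i) :=
  isSymmSepIdem_of_dualBases_general k A p₁ p₂ hdual
end

section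
/- Let H be a finite-dimensional Hopf algebra over a field k whose antipode S is involutive (S ∘ S = id_H), and let ℓ ∈ H be a two-sided normalized integral, i.e. x·ℓ = ε(x)·ℓ = ℓ·x for all x ∈ H and ε(ℓ) = 1. Then the element Σ ℓ₍₁₎ ⊗ S(ℓ₍₂₎) = ((id_H ⊗ S) ∘ Δ)(ℓ) ∈ H ⊗ H is a symmetric separability idempotent for the algebra underlying H: it satisfies (i) (x·ℓ₍₁₎) ⊗ S(ℓ₍₂₎) = ℓ₍₁₎ ⊗ (S(ℓ₍₂₎)·x) for all x ∈ H, (ii) Σ ℓ₍₁₎·S(ℓ₍₂₎) = 1, and (iii) Σ ℓ₍₁₎ ⊗ S(ℓ₍₂₎) = Σ S(ℓ₍₂₎) ⊗ ℓ₍₁₎. -/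
/-!
Both conditions (i) and (iii) come from uniqueness of inverses in convolution algebras
`Hom(H, H ⊗ H)`. For (i), put `p = Σ ℓ₍₁₎ ⊗ S(ℓ₍₂₎)`, `φ x = (x ⊗ 1) p` and `ψ x = p (1 ⊗ x)`:
since `Δ(xℓ) = ε(x) Δℓ`, the convolution of `φ` with `x ↦ 1 ⊗ S x` is `x ↦ ε(x) p`, and
convolving once more with the inverse `x ↦ 1 ⊗ x` turns `φ` into `ψ`. For (iii), the antipode is
an anti-coalgebra map, so `Δℓ = Δ(Sℓ) = Σ S(ℓ₍₂₎) ⊗ S(ℓ₍₁₎)`, where `Sℓ = S(ℓ · Sℓ) = ℓ · Sℓ = ℓ`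
because `S` is an involutive anti-homomorphism and `ℓ` a normalized right integral. Condition (ii)
is the antipode axiom together with `ε(ℓ) = 1`.
-/

open scoped TensorProduct

open Coalgebra WithConv
open Algebra.TensorProduct (includeLeft includeRight includeLeft_apply includeRight_apply)

section TensorProduct

variable {k A B : Type*} [CommSemiring k] [Semiring A] [Algebra k A] [Semiring B] [Algebra k B]

lemma rTensor_mulLeft_eq_tmul_one_mul (x : A) (p : A ⊗[k] B) :
    (LinearMap.mulLeft k x).rTensor B p = (x ⊗ₜ 1) * p := by
  rw [← LinearMap.mulLeft_apply (R := k), LinearMap.mulLeft_tmul, LinearMap.mulLeft_one]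
  rfl

lemma lTensor_mulRight_eq_mul_one_tmul (x : B) (p : A ⊗[k] B) :
    (LinearMap.mulRight k x).lTensor A p = p * (1 ⊗ₜ x) := by
  rw [← LinearMap.mulRight_apply (R := k), LinearMap.mulRight_tmul, LinearMap.mulRight_one]
  rfl

end TensorProduct

namespace Bialgebra

variable {k H : Type*} [CommSemiring k] [Semiring H] [Bialgebra k H]

lemma includeLeft_convMul_includeRight :
    toConv (includeLeft : H →ₐ[k] H ⊗[k] H).toLinearMap *
      toConv (includeRight : H →ₐ[k] H ⊗[k] H).toLinearMap = toConv (comul (R := k)) := by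
  ext a
  simp [(ℛ k a).convMul_apply, ← (ℛ k a).eq]

lemma toSpanSingleton_comp_counit_convMul_includeRight (p : H ⊗[k] H) :
    toConv (LinearMap.toSpanSingleton k _ p ∘ₗ counit) *
        toConv (includeRight : H →ₐ[k] H ⊗[k] H).toLinearMap =
      toConv (LinearMap.mulLeft k p ∘ₗ (includeRight : H →ₐ[k] H ⊗[k] H).toLinearMap) := by
  ext a
  rw [(ℛ k a).convMul_apply]
  conv_rhs => rw [← sum_counit_smul (ℛ k a)]
  simp

end Bialgebra

namespace HopfAlgebra

variable {k H : Type*} [CommSemiring k] [Semiring H] [HopfAlgebra k H]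

variable (k) in
def IsLeftIntegral (ℓ : H) : Prop := ∀ x : H, x * ℓ = counit (R := k) x • ℓ

variable (k) in
def IsRightIntegral (ℓ : H) : Prop := ∀ x : H, ℓ * x = counit (R := k) x • ℓ

lemma algHom_convMul_algHom_comp_antipode {B : Type*} [Semiring B] [Algebra k B]
    (f : H →ₐ[k] B) : toConv f.toLinearMap * toConv (f.toLinearMap ∘ₗ antipode k) = 1 := by
  have h := LinearMap.algHom_comp_convMul_distrib f (toConv LinearMap.id) (toConv (antipode k))
  rw [LinearMap.id_mul_antipode, LinearMap.comp_id] at h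
  apply ofConv_injective
  rw [← h]
  ext
  simp

lemma algHom_comp_antipode_convMul_algHom {B : Type*} [Semiring B] [Algebra k B]
    (f : H →ₐ[k] B) : toConv (f.toLinearMap ∘ₗ antipode k) * toConv f.toLinearMap = 1 := by
  have h := LinearMap.algHom_comp_convMul_distrib f (toConv (antipode k)) (toConv LinearMap.id)
  rw [LinearMap.antipode_mul_id, LinearMap.comp_id] at h
  apply ofConv_injective
  rw [← h]
  ext
  simp

theorem comul_comp_antipode :
    comul ∘ₗ antipode k (A := H) = TensorProduct.map (antipode k) (antipode k) ∘ₗ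
      (TensorProduct.comm k H H).toLinearMap ∘ₗ comul := by
  have h_swap : toConv (TensorProduct.map (antipode k) (antipode k) ∘ₗ
        (TensorProduct.comm k H H).toLinearMap ∘ₗ comul) =
      toConv ((includeRight : H →ₐ[k] H ⊗[k] H).toLinearMap ∘ₗ antipode k) *
        toConv ((includeLeft : H →ₐ[k] H ⊗[k] H).toLinearMap ∘ₗ antipode k) := by
    ext a
    simp [(ℛ k a).convMul_apply, Algebra.TensorProduct.tmul_mul_tmul, ← (ℛ k a).eq]
  apply toConv_injective
  refine left_inv_eq_right_inv (a := toConv comul)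
    (algHom_comp_antipode_convMul_algHom (Bialgebra.comulAlgHom k H)) ?_
  rw [h_swap, ← Bialgebra.includeLeft_convMul_includeRight, mul_assoc,
    ← mul_assoc (toConv includeRight.toLinearMap), algHom_convMul_algHom_comp_antipode, one_mul,
    algHom_convMul_algHom_comp_antipode]

lemma mulRight_comp_includeLeft_convMul_apply (ℓ a : H) :
    (toConv (LinearMap.mulRight k ((antipode k).lTensor H (comul ℓ)) ∘ₗ
        (includeLeft : H →ₐ[k] H ⊗[k] H).toLinearMap) *
      toConv ((includeRight : H →ₐ[k] H ⊗[k] H).toLinearMap ∘ₗ antipode k)) a =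
      (antipode k).lTensor H (comul (a * ℓ)) := by
  rw [(ℛ k a).convMul_apply, Bialgebra.comul_mul, ← (ℛ k a).eq, ← (ℛ k ℓ).eq]
  simp only [map_sum, LinearMap.lTensor_tmul, LinearMap.comp_apply, AlgHom.toLinearMap_apply,
    includeLeft_apply, includeRight_apply, LinearMap.mulRight_apply, Finset.mul_sum,
    Finset.sum_mul, Algebra.TensorProduct.tmul_mul_tmul, one_mul, mul_one,
    antipode_mul_antidistrib]
  exact Finset.sum_comm

theorem rTensor_mulLeft_eq_lTensor_mulRight_of_isLeftIntegral {ℓ : H} (hℓ : IsLeftIntegral k ℓ)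
    (x : H) :
    (LinearMap.mulLeft k x).rTensor H ((antipode k).lTensor H (comul ℓ)) =
      (LinearMap.mulRight k x).lTensor H ((antipode k).lTensor H (comul ℓ)) := by
  set p := (antipode k).lTensor H (comul ℓ)
  set φ := LinearMap.mulRight k p ∘ₗ (includeLeft : H →ₐ[k] H ⊗[k] H).toLinearMap
  set ψ := LinearMap.mulLeft k p ∘ₗ (includeRight : H →ₐ[k] H ⊗[k] H).toLinearMap
  have hφ : toConv φ * toConv (includeRight.toLinearMap ∘ₗ antipode k) =
      toConv (LinearMap.toSpanSingleton k _ p ∘ₗ counit) := by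
    ext a
    rw [mulRight_comp_includeLeft_convMul_apply, hℓ, map_smul, map_smul]
    rfl
  have hφψ : toConv φ = toConv ψ := calc
    toConv φ = toConv φ * (toConv (includeRight.toLinearMap ∘ₗ antipode k) *
        toConv includeRight.toLinearMap) := by
      rw [algHom_comp_antipode_convMul_algHom, mul_one]
    _ = toConv ψ := by
      rw [← mul_assoc, hφ, Bialgebra.toSpanSingleton_comp_counit_convMul_includeRight]
  rw [rTensor_mulLeft_eq_tmul_one_mul, lTensor_mulRight_eq_mul_one_tmul]
  exact congr($hφψ x)

theorem antipode_eq_self_of_isRightIntegral {ℓ : H} (hℓ : IsRightIntegral k ℓ)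
    (hε : counit (R := k) ℓ = 1) (hS : antipode k (antipode k ℓ) = ℓ) : antipode k ℓ = ℓ := by
  have h : ℓ * antipode k ℓ = ℓ := by rw [hℓ, counit_antipode, hε, one_smul]
  calc antipode k ℓ = antipode k (ℓ * antipode k ℓ) := by rw [h]
    _ = ℓ * antipode k ℓ := by rw [antipode_mul_antidistrib, hS]
    _ = ℓ := h

theorem comm_lTensor_antipode_comul (hS : ∀ h : H, antipode k (antipode k h) = h) {ℓ : H}
    (hℓ : antipode k ℓ = ℓ) :
    TensorProduct.comm k H H ((antipode k).lTensor H (comul ℓ)) =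
      (antipode k).lTensor H (comul ℓ) := by
  have h_swap : (TensorProduct.comm k H H).toLinearMap ∘ₗ (antipode k).lTensor H =
      (antipode k).lTensor H ∘ₗ TensorProduct.map (antipode k) (antipode k) ∘ₗ
        (TensorProduct.comm k H H).toLinearMap :=
    TensorProduct.ext' fun a b => by simp [hS]
  have h_comul : comul (antipode k ℓ) = TensorProduct.map (antipode k) (antipode k)
      (TensorProduct.comm k H H (comul ℓ)) := congr($comul_comp_antipode ℓ)
  calc TensorProduct.comm k H H ((antipode k).lTensor H (comul ℓ))
      = (antipode k).lTensor H (comul (antipode k ℓ)) := by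
        rw [h_comul]
        exact congr($h_swap (comul ℓ))
    _ = (antipode k).lTensor H (comul ℓ) := by rw [hℓ]

end HopfAlgebra

theorem haarIntegral_gives_symmSepIdem_general (k H : Type*) [Field k] [Ring H] [HopfAlgebra k H]
    (hS : ∀ h : H, HopfAlgebra.antipode (R := k) (HopfAlgebra.antipode (R := k) h) = h)
    (ℓ : H)
    (hleft : ∀ x : H, x * ℓ = Coalgebra.counit (R := k) x • ℓ)
    (hright : ∀ x : H, ℓ * x = Coalgebra.counit (R := k) x • ℓ)
    (hnorm : Coalgebra.counit (R := k) ℓ = (1 : k)) :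
    IsSymmSepIdem k
      (LinearMap.lTensor H (HopfAlgebra.antipode (R := k)) (Coalgebra.comul (R := k) ℓ)) := by
  refine ⟨HopfAlgebra.rTensor_mulLeft_eq_lTensor_mulRight_of_isLeftIntegral hleft, ?_, ?_⟩
  · rw [HopfAlgebra.mul_antipode_lTensor_comul_apply, hnorm, map_one]
  · exact HopfAlgebra.comm_lTensor_antipode_comul hS
      (HopfAlgebra.antipode_eq_self_of_isRightIntegral hright hnorm (hS ℓ))

/-- If `H` is a finite-dimensional Hopf algebra over a field `k` with involutive antipode `S`
and `ℓ ∈ H` is a two-sided normalized integral (`x·ℓ = ε(x)·ℓ = ℓ·x`, `ε(ℓ) = 1`), then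
`Σ ℓ₍₁₎ ⊗ S(ℓ₍₂₎) = (id ⊗ S)(Δℓ)` is a symmetric separability idempotent for the algebra
underlying `H`. -/
theorem haarIntegral_gives_symmSepIdem (k H : Type*) [Field k] [Ring H] [HopfAlgebra k H]
    [FiniteDimensional k H]
    (hS : ∀ h : H, HopfAlgebra.antipode (R := k) (HopfAlgebra.antipode (R := k) h) = h)
    (ℓ : H)
    (hleft : ∀ x : H, x * ℓ = Coalgebra.counit (R := k) x • ℓ)
    (hright : ∀ x : H, ℓ * x = Coalgebra.counit (R := k) x • ℓ)
    (hnorm : Coalgebra.counit (R := k) ℓ = (1 : k)) :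
    IsSymmSepIdem k
      (LinearMap.lTensor H (HopfAlgebra.antipode (R := k)) (Coalgebra.comul (R := k) ℓ)) :=
  haarIntegral_gives_symmSepIdem_general k H hS ℓ hleft hright hnorm
end

section
/- Let H be a finite-dimensional Hopf algebra over a field k whose antipode S is involutive, and let K be a finite-dimensional right H-comodule algebra with coaction δ : K → K ⊗ H, δ(x) = Σ x₍₀₎ ⊗ x₍₁₎. Let t : K → k be the trace form t(x) = tr(L_x), where L_x is left multiplication by x on the finite-dimensional vector space K. Then the trace form is a morphism of right H-comodules: Σ t(x₍₀₎)·x₍₁₎ = t(x)·1_H for all x ∈ K. -/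
/-!
Testing against functionals `ξ ∈ H*`, it suffices to show `t(ξ ⇀ x) = ξ(1) t(x)` with
`ξ ⇀ x = Σ ξ(x₁) x₀`. Left multiplication by `ξ ⇀ x` factors as `P ∘ Q` through `K ⊗ H`, where
`Q y = Σ x y₀ ⊗ S(y₁)` and `P (z ⊗ h) = Σ ξ(z₁ h) z₀`, because
`Σ y₀₀ ⊗ y₀₁ S(y₁) = y ⊗ 1`. By cyclicity `t(ξ ⇀ x) = tr(Q ∘ P)`, and
`Q ∘ P (z ⊗ h) = Σ ξ(z₂ h) x z₀ ⊗ S(z₁)`. Taking the trace over the `H` factor first leaves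
`z ↦ Σ ξ(z₂ S(z₁)) x z₀`, and for an involutive antipode `Σ z₂ S(z₁) = ε(z) 1`, so this map is
`ξ(1) L_x`.
-/

open LinearMap TensorProduct

namespace HopfAlgebra

variable {k H : Type*} [CommSemiring k] [Semiring H] [HopfAlgebra k H]

theorem mul'_comm_antipode_rTensor_comul_of_involutive
    (hS : ∀ h : H, antipode k (antipode k h) = h) :
    (mul' k H ∘ₗ (TensorProduct.comm k H H).toLinearMap ∘ₗ (antipode k).rTensor H) ∘ₗ
      Coalgebra.comul = Algebra.linearMap k H ∘ₗ Coalgebra.counit := by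
  have hSS : antipode k ∘ₗ antipode k = (LinearMap.id : H →ₗ[k] H) := LinearMap.ext hS
  calc _ = antipode k ∘ₗ (antipode k ∘ₗ mul' k H ∘ₗ (TensorProduct.comm k H H).toLinearMap) ∘ₗ
          (antipode k).rTensor H ∘ₗ Coalgebra.comul := by
        simp only [← comp_assoc, hSS, id_comp]
    _ = antipode k ∘ₗ mul' k H ∘ₗ (map (antipode k) (antipode k) ∘ₗ (antipode k).rTensor H) ∘ₗ
          Coalgebra.comul := by
        rw [antipode_comp_mul_comp_comm]; rfl
    _ = antipode k ∘ₗ mul' k H ∘ₗ (antipode k).lTensor H ∘ₗ Coalgebra.comul := by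
        rw [map_comp_rTensor, hSS]; rfl
    _ = Algebra.linearMap k H ∘ₗ Coalgebra.counit := by
        rw [mul_antipode_lTensor_comul]
        ext h
        simp [Algebra.algebraMap_eq_smul_one]

end HopfAlgebra

section PartialTrace

variable {R M V : Type*} [CommRing R] [AddCommGroup M] [Module R M] [Module.Free R M]
  [Module.Finite R M] [AddCommGroup V] [Module R V] [Module.Free R V] [Module.Finite R V]

/-- For `G z = Σ mᵢ ⊗ fᵢ`, the map on the left is `z ⊗ v ↦ Σ mᵢ ⊗ fᵢ v` and the one on the right
is `z ↦ Σ tr(fᵢ) • mᵢ`. -/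
theorem LinearMap.trace_lTensor_lift_id_comp_rTensor (G : M →ₗ[R] M ⊗[R] Module.End R V) :
    trace R (M ⊗[R] V) (lTensor M (lift LinearMap.id) ∘ₗ
        (TensorProduct.assoc R M (Module.End R V) V).toLinearMap ∘ₗ rTensor V G)
      = trace R M ((TensorProduct.rid R M).toLinearMap ∘ₗ lTensor M (trace R V) ∘ₗ G) := by
  obtain ⟨u, rfl⟩ := (dualTensorHomEquiv R M (M ⊗[R] Module.End R V)).surjective G
  induction u using TensorProduct.induction_on with
  | zero => simp
  | add u v hu hv => simp only [map_add, rTensor_add, comp_add, hu, hv]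
  | tmul φ w =>
    induction w using TensorProduct.induction_on with
    | zero => simp
    | add w w' hw hw' => simp only [tmul_add, map_add, rTensor_add, comp_add, hw, hw']
    | tmul m f =>
      have hL : lTensor M (lift LinearMap.id) ∘ₗ
          (TensorProduct.assoc R M (Module.End R V) V).toLinearMap ∘ₗ
            rTensor V (dualTensorHomEquiv R M _ (φ ⊗ₜ (m ⊗ₜ f)))
          = map (dualTensorHom R M M (φ ⊗ₜ m)) f := by
        ext z v; simp [dualTensorHom_apply, smul_tmul']
      have hR : (TensorProduct.rid R M).toLinearMap ∘ₗ lTensor M (trace R V) ∘ₗ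
            dualTensorHomEquiv R M _ (φ ⊗ₜ (m ⊗ₜ f))
          = trace R V f • dualTensorHom R M M (φ ⊗ₜ m) := by
        ext z; simp [dualTensorHom_apply, smul_smul, mul_comm]
      rw [hL, hR, trace_tensorProduct', map_smul, smul_eq_mul, mul_comm]

end PartialTrace

theorem apply_lid_rTensor_eq_apply_rid_lTensor {R M N : Type*} [CommSemiring R] [AddCommMonoid M]
    [Module R M] [AddCommMonoid N] [Module R N] (f : M →ₗ[R] R) (g : N →ₗ[R] R) (u : M ⊗[R] N) :
    g (TensorProduct.lid R N (rTensor N f u)) = f (TensorProduct.rid R M (lTensor M g u)) := by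
  induction u using TensorProduct.induction_on with
  | zero => simp
  | tmul m n => simp [mul_comm]
  | add u v hu hv => simp [hu, hv]

theorem lTensor_mul'_comp_lTensor_assoc_tmul {k H K : Type*} [CommSemiring k] [Semiring H]
    [Algebra k H] [Semiring K] [Algebra k K] (f : H →ₗ[k] H) (u : K ⊗[k] H) (h : H) :
    lTensor K (mul' k H ∘ₗ lTensor H f) (TensorProduct.assoc k K H H (u ⊗ₜ h))
      = u * (1 ⊗ₜ f h) := by
  induction u using TensorProduct.induction_on with
  | zero => simp
  | tmul a b => simp
  | add u v hu hv => simp [add_tmul, add_mul, hu, hv]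

theorem rid_lTensor_mul_tmul_one {k H K : Type*} [CommSemiring k] [Semiring H] [Algebra k H]
    [Semiring K] [Algebra k K] (ξ : Module.Dual k H) (u : K ⊗[k] H) (y : K) :
    TensorProduct.rid k K (lTensor K ξ (u * (y ⊗ₜ 1)))
      = TensorProduct.rid k K (lTensor K ξ u) * y := by
  induction u using TensorProduct.induction_on with
  | zero => simp
  | tmul a b => simp
  | add u v hu hv => simp [add_mul, hu, hv]

section Coaction

variable {k H K : Type*} [CommSemiring k] [Semiring H] [Bialgebra k H] [AddCommMonoid K]
  [Module k K]

structure IsCoaction (δ : K →ₗ[k] K ⊗[k] H) : Prop where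
  coassoc : ∀ x : K,
    TensorProduct.assoc k K H H (rTensor H δ (δ x)) = lTensor K (Coalgebra.comul (R := k)) (δ x)
  counit : ∀ x : K, TensorProduct.rid k K (lTensor K (Coalgebra.counit (R := k)) (δ x)) = x

theorem IsCoaction.lTensor_assoc_rTensor_eq_tmul_one {δ : K →ₗ[k] K ⊗[k] H} (hδ : IsCoaction δ)
    {f : H ⊗[k] H →ₗ[k] H} (hf : f ∘ₗ Coalgebra.comul = Algebra.linearMap k H ∘ₗ Coalgebra.counit)
    (x : K) :
    lTensor K f (TensorProduct.assoc k K H H (rTensor H δ (δ x))) = x ⊗ₜ 1 := by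
  rw [hδ.coassoc, ← lTensor_comp_apply, hf, lTensor_comp_apply]
  conv_rhs => rw [← hδ.counit x]
  induction lTensor K Coalgebra.counit (δ x) using TensorProduct.induction_on with
  | zero => simp
  | tmul a c => simp [Algebra.algebraMap_eq_smul_one, smul_tmul]
  | add u v hu hv => simp [add_tmul, hu, hv]

end Coaction

section ComoduleAlgebra

variable {k H K : Type*} [CommSemiring k] [Semiring H] [HopfAlgebra k H] [Semiring K] [Algebra k K]
  (δ : K →ₐ[k] K ⊗[k] H) (ξ : Module.Dual k H) (x : K)

local notation "S" => HopfAlgebra.antipode k (A := H)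

noncomputable def coactionMulRight : K ⊗[k] H →ₗ[k] K ⊗[k] H :=
  mul' k (K ⊗[k] H) ∘ₗ map δ.toLinearMap Algebra.TensorProduct.includeRight.toLinearMap

@[simp] theorem coactionMulRight_tmul (z : K) (h : H) :
    coactionMulRight δ (z ⊗ₜ h) = δ z * (1 ⊗ₜ h) := rfl

theorem coactionMulRight_comp_rTensor_mulLeft :
    coactionMulRight δ ∘ₗ rTensor H (mulLeft k x) = mulLeft k (δ x) ∘ₗ coactionMulRight δ := by
  ext z h; simp [mul_assoc]

variable {δ} in
theorem IsCoaction.coactionMulRight_lTensor_antipode (hδ : IsCoaction δ.toLinearMap) (y : K) :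
    coactionMulRight δ (lTensor K S (δ y)) = y ⊗ₜ 1 := by
  have h : coactionMulRight δ ∘ₗ lTensor K S = lTensor K (mul' k H ∘ₗ lTensor H S) ∘ₗ
      (TensorProduct.assoc k K H H).toLinearMap ∘ₗ rTensor H δ.toLinearMap := by
    ext z h; simp [lTensor_mul'_comp_lTensor_assoc_tmul]
  rw [← comp_apply (coactionMulRight δ), h]
  exact hδ.lTensor_assoc_rTensor_eq_tmul_one HopfAlgebra.mul_antipode_lTensor_comul y

/-- `z ⊗ h ↦ Σ ξ(z₁ h) z₀` -/
noncomputable def contractCoaction : K ⊗[k] H →ₗ[k] K :=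
  (TensorProduct.rid k K).toLinearMap ∘ₗ lTensor K ξ ∘ₗ coactionMulRight δ

noncomputable def antipodeCoaction : K →ₗ[k] K ⊗[k] H :=
  rTensor H (mulLeft k x) ∘ₗ lTensor K S ∘ₗ δ.toLinearMap

noncomputable def smulRightAntipode : H ⊗[k] H →ₗ[k] Module.End k H :=
  lift ((smulRightₗ ∘ₗ (mul k H).compr₂ ξ).compl₂ S).flip

@[simp] theorem smulRightAntipode_tmul (b c : H) :
    smulRightAntipode ξ (b ⊗ₜ c) = (ξ ∘ₗ mulLeft k c).smulRight (S b) := rfl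

/-- `z ↦ Σ x z₀ ⊗ (h ↦ ξ(z₂ h) • S z₁)` -/
noncomputable def twistedCoaction : K →ₗ[k] K ⊗[k] Module.End k H :=
  map (mulLeft k x) (smulRightAntipode ξ) ∘ₗ (TensorProduct.assoc k K H H).toLinearMap ∘ₗ
    rTensor H δ.toLinearMap ∘ₗ δ.toLinearMap

variable {δ} in
theorem IsCoaction.contractCoaction_comp_antipodeCoaction (hδ : IsCoaction δ.toLinearMap) :
    contractCoaction δ ξ ∘ₗ antipodeCoaction δ x
      = mulLeft k (TensorProduct.rid k K (lTensor K ξ (δ x))) := by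
  ext y
  have h := congr($(coactionMulRight_comp_rTensor_mulLeft δ x) (lTensor K S (δ y)))
  simp only [comp_apply] at h
  simp only [contractCoaction, antipodeCoaction, comp_apply, LinearEquiv.coe_coe,
    AlgHom.toLinearMap_apply, h, hδ.coactionMulRight_lTensor_antipode, mulLeft_apply,
    rid_lTensor_mul_tmul_one]

theorem antipodeCoaction_comp_contractCoaction :
    antipodeCoaction δ x ∘ₗ contractCoaction δ ξ
      = lTensor K (lift LinearMap.id) ∘ₗ
          (TensorProduct.assoc k K (Module.End k H) H).toLinearMap ∘ₗ
            rTensor H (twistedCoaction δ ξ x) := by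
  ext z h
  simp only [AlgebraTensorModule.curry_apply, curry_apply, coe_restrictScalars, comp_apply,
    contractCoaction, antipodeCoaction, twistedCoaction, LinearEquiv.coe_coe, rTensor_tmul,
    coactionMulRight_tmul, AlgHom.toLinearMap_apply]
  induction δ z using TensorProduct.induction_on with
  | zero => simp
  | add u v hu hv => simp only [add_mul, map_add, add_tmul, hu, hv]
  | tmul a c =>
    simp only [Algebra.TensorProduct.tmul_mul_tmul, mul_one, lTensor_tmul, rid_tmul, map_smul,
      rTensor_tmul, AlgHom.toLinearMap_apply]
    induction δ a using TensorProduct.induction_on with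
    | zero => simp
    | add u v hu hv => simp [add_tmul, hu, hv, smul_add]
    | tmul a' b => simp

end ComoduleAlgebra

section TraceForm

variable {k H K : Type*} [CommRing k] [Ring H] [HopfAlgebra k H] [Module.Free k H]
  [Module.Finite k H] [Ring K] [Algebra k K] {δ : K →ₐ[k] K ⊗[k] H} (ξ : Module.Dual k H) (x : K)

local notation "S" => HopfAlgebra.antipode k (A := H)

theorem IsCoaction.rid_comp_lTensor_trace_comp_twistedCoaction (hδ : IsCoaction δ.toLinearMap)
    (hS : ∀ h : H, S (S h) = h) :
    (TensorProduct.rid k K).toLinearMap ∘ₗ lTensor K (trace k H) ∘ₗ twistedCoaction δ ξ x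
      = ξ 1 • mulLeft k x := by
  have hE : (TensorProduct.rid k K).toLinearMap ∘ₗ lTensor K (trace k H) ∘ₗ
        map (mulLeft k x) (smulRightAntipode ξ)
      = mulLeft k x ∘ₗ (TensorProduct.rid k K).toLinearMap ∘ₗ lTensor K ξ ∘ₗ
        lTensor K (mul' k H ∘ₗ (TensorProduct.comm k H H).toLinearMap ∘ₗ rTensor H S) := by
    ext a b c; simp
  ext z
  have h := congr($hE (TensorProduct.assoc k K H H (rTensor H δ.toLinearMap (δ z))))
  have hz := hδ.lTensor_assoc_rTensor_eq_tmul_one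
    (HopfAlgebra.mul'_comm_antipode_rTensor_comul_of_involutive hS) z
  simp only [AlgHom.toLinearMap_apply] at hz
  refine h.trans ?_
  simp only [comp_apply, LinearEquiv.coe_coe, hz]
  simp

theorem IsCoaction.trace_mulLeft_rid_lTensor [Module.Free k K] [Module.Finite k K]
    (hδ : IsCoaction δ.toLinearMap) (hS : ∀ h : H, S (S h) = h) :
    trace k K (mulLeft k (TensorProduct.rid k K (lTensor K ξ (δ x))))
      = ξ 1 * trace k K (mulLeft k x) := by
  calc _ = trace k K (contractCoaction δ ξ ∘ₗ antipodeCoaction δ x) := by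
        rw [hδ.contractCoaction_comp_antipodeCoaction]
    _ = trace k (K ⊗[k] H) (antipodeCoaction δ x ∘ₗ contractCoaction δ ξ) :=
        trace_comp_comm' _ _
    _ = trace k K ((TensorProduct.rid k K).toLinearMap ∘ₗ lTensor K (trace k H) ∘ₗ
          twistedCoaction δ ξ x) := by
        rw [antipodeCoaction_comp_contractCoaction, trace_lTensor_lift_id_comp_rTensor]
    _ = ξ 1 * trace k K (mulLeft k x) := by
        rw [hδ.rid_comp_lTensor_trace_comp_twistedCoaction ξ x hS, map_smul, smul_eq_mul]

end TraceForm

/-- Let `H` be a finite-dimensional Hopf algebra over a field `k` with involutive antipode and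
let `K` be a finite-dimensional right `H`-comodule algebra with coaction `δ : K → K ⊗ H`.
Then the trace form `t(x) = tr(L_x)` is a morphism of right `H`-comodules:
`Σ t(x₍₀₎)·x₍₁₎ = t(x)·1_H` for all `x ∈ K`. -/
theorem traceForm_colinear (k H K : Type*) [Field k] [Ring H] [HopfAlgebra k H]
    [FiniteDimensional k H] [Ring K] [Algebra k K] [FiniteDimensional k K]
    (hS : ∀ h : H, HopfAlgebra.antipode (R := k) (HopfAlgebra.antipode (R := k) h) = h)
    (δ : K →ₐ[k] K ⊗[k] H)
    (hcoassoc : ∀ x : K,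
      TensorProduct.assoc k K H H (LinearMap.rTensor H δ.toLinearMap (δ x))
        = LinearMap.lTensor K (Coalgebra.comul (R := k)) (δ x))
    (hcounit : ∀ x : K,
      TensorProduct.rid k K (LinearMap.lTensor K (Coalgebra.counit (R := k)) (δ x)) = x) :
    ∀ x : K,
      TensorProduct.lid k H
        (LinearMap.rTensor H ((LinearMap.trace k K) ∘ₗ (LinearMap.mul k K)) (δ x))
      = ((LinearMap.trace k K) ∘ₗ (LinearMap.mul k K)) x • (1 : H) := by
  intro x
  rw [← sub_eq_zero, ← Module.forall_dual_apply_eq_zero_iff k]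
  intro ξ
  rw [map_sub, sub_eq_zero, apply_lid_rTensor_eq_apply_rid_lTensor, map_smul, smul_eq_mul,
    mul_comm]
  exact IsCoaction.trace_mulLeft_rid_lTensor ξ x ⟨hcoassoc, hcounit⟩ hS
end
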